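/- Under the stochastic compliance class IV assumptions ((Y(1),Y(0),U) independent of Z; (Y(1),Y(0)) conditionally independent of D given (Z,U); Y = D·Y(1)+(1−D)·Y(0); and E[w(U)] ≠ 0), the Wald ratio identifies the strength-of-IV weighted average treatment effect: (E[Y|Z=1] − E[Y|Z=0]) / (P(D=1|Z=1) − P(D=1|Z=0)) = E[(Y(1)−Y(0))·w(U)] / E[w(U)], where w(u) = P(D=1|Z=1,U=u) − P(D=1|Z=0,U=u). -/

import Mathlib

open Finset
open scoped Classical

/-- Probability of an event `A` under mass function `p` on a finite sample space. -/
noncomputable def prb {Ω : Type*} [Fintype Ω] (p : Ω → ℝ) (A : Ω → Prop) : ℝ :=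
  ∑ ω, if A ω then p ω else 0

/-- Expectation of a real random variable `X` under mass function `p`. -/
noncomputable def exv {Ω : Type*} [Fintype Ω] (p : Ω → ℝ) (X : Ω → ℝ) : ℝ :=
  ∑ ω, p ω * X ω

/-- Conditional probability `P(A | B)`. -/
noncomputable def cpr {Ω : Type*} [Fintype Ω] (p : Ω → ℝ) (A B : Ω → Prop) : ℝ :=
  prb p (fun ω => A ω ∧ B ω) / prb p B

/-- Conditional expectation `E[X | B]`. -/
noncomputable def cex {Ω : Type*} [Fintype Ω] (p : Ω → ℝ) (X : Ω → ℝ) (B : Ω → Prop) : ℝ :=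
  (∑ ω, if B ω then p ω * X ω else 0) / prb p B

/-!
Write `V = (Y(1), Y(0), U)` and `q(z, u) = P(D = 1 | Z = z, U = u)`. Independence of `V` and `Z`,
together with conditional independence of `(Y(1), Y(0))` and `D` given `(Z, U)`, factors
`P(V = v, D = 1, Z = z) = q(z, u) P(Z = z) P(V = v)`. Since `Y = Y(0) + D (Y(1) - Y(0))`, this gives
`E[Y | Z = z] = E[Y(0)] + E[q(z, U) (Y(1) - Y(0))]` and `P(D = 1 | Z = z) = E[q(z, U)]`, and the
differences over `z` turn `q(1, U) - q(0, U)` into `w(U)` in numerator and denominator alike.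
-/

/-- `E[X; B] = E[X · 1_B]`. -/
noncomputable def exvOn {Ω : Type*} [Fintype Ω] (p : Ω → ℝ) (X : Ω → ℝ) (B : Ω → Prop) :
    ℝ :=
  ∑ ω, if B ω then p ω * X ω else 0

section Expectation

variable {Ω β : Type*} [Fintype Ω] (p : Ω → ℝ)

theorem prb_congr {A B : Ω → Prop} (h : ∀ ω, A ω ↔ B ω) : prb p A = prb p B :=
  sum_congr rfl fun ω _ => if_congr (h ω) rfl rfl

theorem cex_eq_exvOn_div (X : Ω → ℝ) (B : Ω → Prop) : cex p X B = exvOn p X B / prb p B :=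
  rfl

theorem exvOn_one (A : Ω → Prop) : exvOn p (fun _ => 1) A = prb p A := by
  simp [exvOn, prb]

theorem exvOn_true (X : Ω → ℝ) : exvOn p X (fun _ => True) = exv p X := by
  simp [exvOn, exv]

theorem exv_sub (X X' : Ω → ℝ) : exv p (fun ω => X ω - X' ω) = exv p X - exv p X' := by
  simp [exv, mul_sub, sum_sub_distrib]

theorem exv_mul_const (X : Ω → ℝ) (a : ℝ) : exv p (fun ω => X ω * a) = exv p X * a := by
  simp [exv, sum_mul, mul_assoc]

theorem exvOn_comp_eq_sum_mul_prb (V : Ω → β) (g : β → ℝ) (A : Ω → Prop) :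
    exvOn p (fun ω => g (V ω)) A =
      ∑ b ∈ univ.image V, g b * prb p (fun ω => V ω = b ∧ A ω) := by
  simp only [exvOn, prb, mul_sum]
  rw [sum_comm]
  refine sum_congr rfl fun ω _ => ?_
  rw [sum_eq_single (V ω)]
  · by_cases hA : A ω <;> simp [hA, mul_comm]
  · intro b _ hb
    simp [Ne.symm hb]
  · simp

theorem exvOn_comp_eq_exv_of_prb_eq (V : Ω → β) (c g : β → ℝ) (A : Ω → Prop)
    (h : ∀ b, prb p (fun ω => V ω = b ∧ A ω) = c b * prb p (fun ω => V ω = b)) :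
    exvOn p (fun ω => g (V ω)) A = exv p (fun ω => c (V ω) * g (V ω)) := by
  have h' : ∀ b,
      prb p (fun ω => V ω = b ∧ A ω) = c b * prb p (fun ω => V ω = b ∧ True) :=
    fun b => by simpa using h b
  rw [exvOn_comp_eq_sum_mul_prb, ← exvOn_true, exvOn_comp_eq_sum_mul_prb p V (fun b => c b * g b)]
  exact sum_congr rfl fun b _ => by rw [h' b]; ring

theorem prb_and_and_eq_cpr_mul_prb_and {A C B : Ω → Prop} (hB : prb p B ≠ 0)
    (h : cpr p (fun ω => A ω ∧ C ω) B = cpr p A B * cpr p C B) :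
    prb p (fun ω => (A ω ∧ C ω) ∧ B ω) = cpr p C B * prb p (fun ω => A ω ∧ B ω) := by
  unfold cpr at h ⊢
  field_simp at h
  rw [div_mul_eq_mul_div, eq_div_iff hB]
  linarith

end Expectation

section Factorization

variable {Ω β : Type*} [Fintype Ω] (p : Ω → ℝ) (V : Ω → β) (D Z : Ω → ℝ) (z : ℝ)
  (r : β → ℝ)

theorem cpr_eq_exv_of_prb_eq (hZ : prb p (fun ω => Z ω = z) ≠ 0)
    (hVDZ : ∀ b, prb p (fun ω => V ω = b ∧ D ω = 1 ∧ Z ω = z) =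
      r b * prb p (fun ω => Z ω = z) * prb p (fun ω => V ω = b)) :
    cpr p (fun ω => D ω = 1) (fun ω => Z ω = z) = exv p (fun ω => r (V ω)) := by
  have h := exvOn_comp_eq_exv_of_prb_eq p V _ (fun _ => 1) _ hVDZ
  simp only [exvOn_one, mul_one, exv_mul_const] at h
  rw [cpr, h, mul_div_cancel_right₀ _ hZ]

theorem cex_eq_exv_add_exv_of_prb_eq (g₀ g₁ : β → ℝ) (Y : Ω → ℝ)
    (hD : ∀ ω, D ω = 0 ∨ D ω = 1) (hY : ∀ ω, Y ω = g₀ (V ω) + D ω * g₁ (V ω))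
    (hZ : prb p (fun ω => Z ω = z) ≠ 0)
    (hVZ : ∀ b, prb p (fun ω => V ω = b ∧ Z ω = z) =
      prb p (fun ω => Z ω = z) * prb p (fun ω => V ω = b))
    (hVDZ : ∀ b, prb p (fun ω => V ω = b ∧ D ω = 1 ∧ Z ω = z) =
      r b * prb p (fun ω => Z ω = z) * prb p (fun ω => V ω = b)) :
    cex p Y (fun ω => Z ω = z) =
      exv p (fun ω => g₀ (V ω)) + exv p (fun ω => r (V ω) * g₁ (V ω)) := by
  have hsplit : exvOn p Y (fun ω => Z ω = z) =
      exvOn p (fun ω => g₀ (V ω)) (fun ω => Z ω = z) +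
        exvOn p (fun ω => g₁ (V ω)) (fun ω => D ω = 1 ∧ Z ω = z) := by
    simp only [exvOn, ← sum_add_distrib]
    refine sum_congr rfl fun ω _ => ?_
    rcases hD ω with h | h <;> by_cases hz : Z ω = z <;> simp [h, hz, hY ω, mul_add]
  have h₀ := exvOn_comp_eq_exv_of_prb_eq p V _ g₀ _ hVZ
  have h₁ := exvOn_comp_eq_exv_of_prb_eq p V _ g₁ _ hVDZ
  rw [cex_eq_exvOn_div, hsplit, h₀, h₁, div_eq_iff hZ, add_mul]
  congr 1 <;> simp only [exv, sum_mul] <;> exact sum_congr rfl fun _ _ => by ring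

end Factorization

section PotentialOutcomes

variable {Ω ι : Type*} [Fintype Ω] (p : Ω → ℝ) (Z D Y1 Y0 : Ω → ℝ) (U : Ω → ι)
  (y1 y0 z : ℝ) (u : ι)

theorem prb_outcomes_and_instrument_eq
    (hindep : prb p (fun ω => Y1 ω = y1 ∧ Y0 ω = y0 ∧ U ω = u ∧ Z ω = z) =
      prb p (fun ω => Y1 ω = y1 ∧ Y0 ω = y0 ∧ U ω = u) * prb p (fun ω => Z ω = z)) :
    prb p (fun ω => (Y1 ω, Y0 ω, U ω) = (y1, y0, u) ∧ Z ω = z) =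
      prb p (fun ω => Z ω = z) * prb p (fun ω => (Y1 ω, Y0 ω, U ω) = (y1, y0, u)) := by
  have hV : prb p (fun ω => (Y1 ω, Y0 ω, U ω) = (y1, y0, u)) =
      prb p (fun ω => Y1 ω = y1 ∧ Y0 ω = y0 ∧ U ω = u) := prb_congr p fun ω => by simp
  rw [mul_comm, hV, ← hindep]
  exact prb_congr p fun ω => by simp [and_assoc]

theorem prb_outcomes_and_treated_and_instrument_eq
    (hZU : prb p (fun ω => Z ω = z ∧ U ω = u) ≠ 0)
    (hindep : prb p (fun ω => Y1 ω = y1 ∧ Y0 ω = y0 ∧ U ω = u ∧ Z ω = z) =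
      prb p (fun ω => Y1 ω = y1 ∧ Y0 ω = y0 ∧ U ω = u) * prb p (fun ω => Z ω = z))
    (hcind :
      cpr p (fun ω => Y1 ω = y1 ∧ Y0 ω = y0 ∧ D ω = 1) (fun ω => Z ω = z ∧ U ω = u) =
      cpr p (fun ω => Y1 ω = y1 ∧ Y0 ω = y0) (fun ω => Z ω = z ∧ U ω = u) *
        cpr p (fun ω => D ω = 1) (fun ω => Z ω = z ∧ U ω = u)) :
    prb p (fun ω => (Y1 ω, Y0 ω, U ω) = (y1, y0, u) ∧ D ω = 1 ∧ Z ω = z) =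
      cpr p (fun ω => D ω = 1) (fun ω => Z ω = z ∧ U ω = u) * prb p (fun ω => Z ω = z) *
        prb p (fun ω => (Y1 ω, Y0 ω, U ω) = (y1, y0, u)) := by
  simp only [← and_assoc] at hcind
  calc prb p (fun ω => (Y1 ω, Y0 ω, U ω) = (y1, y0, u) ∧ D ω = 1 ∧ Z ω = z)
      = prb p (fun ω => ((Y1 ω = y1 ∧ Y0 ω = y0) ∧ D ω = 1) ∧ Z ω = z ∧ U ω = u) :=
        prb_congr p fun ω => by simp only [Prod.mk.injEq]; tauto
    _ = cpr p (fun ω => D ω = 1) (fun ω => Z ω = z ∧ U ω = u) *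
          prb p (fun ω => (Y1 ω = y1 ∧ Y0 ω = y0) ∧ Z ω = z ∧ U ω = u) :=
        prb_and_and_eq_cpr_mul_prb_and p hZU hcind
    _ = cpr p (fun ω => D ω = 1) (fun ω => Z ω = z ∧ U ω = u) *
          prb p (fun ω => (Y1 ω, Y0 ω, U ω) = (y1, y0, u) ∧ Z ω = z) := by
        congr 1
        exact prb_congr p fun ω => by simp only [Prod.mk.injEq]; tauto
    _ = _ := by rw [prb_outcomes_and_instrument_eq p Z Y1 Y0 U y1 y0 z u hindep, mul_assoc]

end PotentialOutcomes

theorem stmt3_general {Ω ι : Type*} [Fintype Ω]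
    (p : Ω → ℝ)
    (Z D Y Y1 Y0 : Ω → ℝ) (U : Ω → ι)
    (hDbin : ∀ ω, D ω = 0 ∨ D ω = 1)
    (hYobs : ∀ ω, Y ω = D ω * Y1 ω + (1 - D ω) * Y0 ω)
    (hpos : ∀ (z : ℝ) (u : ι), (z = 0 ∨ z = 1) →
      0 < prb p (fun ω => Z ω = z ∧ U ω = u))
    (hindep : ∀ (y1 y0 : ℝ) (u : ι) (z : ℝ),
      prb p (fun ω => Y1 ω = y1 ∧ Y0 ω = y0 ∧ U ω = u ∧ Z ω = z) =
        prb p (fun ω => Y1 ω = y1 ∧ Y0 ω = y0 ∧ U ω = u) * prb p (fun ω => Z ω = z))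
    (hcind : ∀ (y1 y0 d z : ℝ) (u : ι),
      cpr p (fun ω => Y1 ω = y1 ∧ Y0 ω = y0 ∧ D ω = d) (fun ω => Z ω = z ∧ U ω = u) =
        cpr p (fun ω => Y1 ω = y1 ∧ Y0 ω = y0) (fun ω => Z ω = z ∧ U ω = u) *
          cpr p (fun ω => D ω = d) (fun ω => Z ω = z ∧ U ω = u))
    (w : ι → ℝ)
    (hw : ∀ u, w u = cpr p (fun ω => D ω = 1) (fun ω => Z ω = 1 ∧ U ω = u) -
                    cpr p (fun ω => D ω = 1) (fun ω => Z ω = 0 ∧ U ω = u))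
    (hZ1 : 0 < prb p (fun ω => Z ω = 1)) (hZ0 : 0 < prb p (fun ω => Z ω = 0)) :
    (cex p Y (fun ω => Z ω = 1) - cex p Y (fun ω => Z ω = 0)) /
        (cpr p (fun ω => D ω = 1) (fun ω => Z ω = 1) -
          cpr p (fun ω => D ω = 1) (fun ω => Z ω = 0)) =
      exv p (fun ω => (Y1 ω - Y0 ω) * w (U ω)) / exv p (fun ω => w (U ω)) := by
  set q : ℝ → ι → ℝ := fun z u =>
    cpr p (fun ω => D ω = 1) (fun ω => Z ω = z ∧ U ω = u)
  have hVZ : ∀ z (b : ℝ × ℝ × ι), prb p (fun ω => (Y1 ω, Y0 ω, U ω) = b ∧ Z ω = z) =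
      prb p (fun ω => Z ω = z) * prb p (fun ω => (Y1 ω, Y0 ω, U ω) = b) :=
    fun z ⟨y1, y0, u⟩ => prb_outcomes_and_instrument_eq p Z Y1 Y0 U y1 y0 z u (hindep y1 y0 u z)
  have hVDZ : ∀ z, z = 0 ∨ z = 1 → ∀ b : ℝ × ℝ × ι,
      prb p (fun ω => (Y1 ω, Y0 ω, U ω) = b ∧ D ω = 1 ∧ Z ω = z) =
        q z b.2.2 * prb p (fun ω => Z ω = z) * prb p (fun ω => (Y1 ω, Y0 ω, U ω) = b) :=
    fun z hz ⟨y1, y0, u⟩ => prb_outcomes_and_treated_and_instrument_eq p Z D Y1 Y0 U y1 y0 z u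
      (hpos z u hz).ne' (hindep y1 y0 u z) (hcind y1 y0 1 z u)
  have hcex : ∀ z, z = 0 ∨ z = 1 → prb p (fun ω => Z ω = z) ≠ 0 →
      cex p Y (fun ω => Z ω = z) =
        exv p Y0 + exv p (fun ω => q z (U ω) * (Y1 ω - Y0 ω)) := fun z hz hZ =>
    cex_eq_exv_add_exv_of_prb_eq p (fun ω => (Y1 ω, Y0 ω, U ω)) D Z z
      (fun b => q z b.2.2) (fun b => b.2.1) (fun b => b.1 - b.2.1) Y hDbin
      (fun ω => by rw [hYobs]; ring) hZ (hVZ z) (hVDZ z hz)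
  have hcpr : ∀ z, z = 0 ∨ z = 1 → prb p (fun ω => Z ω = z) ≠ 0 →
      cpr p (fun ω => D ω = 1) (fun ω => Z ω = z) = exv p (fun ω => q z (U ω)) :=
    fun z hz hZ => cpr_eq_exv_of_prb_eq p (fun ω => (Y1 ω, Y0 ω, U ω)) D Z z
      (fun b => q z b.2.2) hZ (hVDZ z hz)
  rw [hcex 1 (.inr rfl) hZ1.ne', hcex 0 (.inl rfl) hZ0.ne', hcpr 1 (.inr rfl) hZ1.ne',
    hcpr 0 (.inl rfl) hZ0.ne', add_sub_add_left_eq_sub, ← exv_sub, ← exv_sub]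
  simp only [hw, q]
  congr 2 with ω
  ring

/-- the Wald ratio identifies the SIVWATE. -/
theorem stmt3 {Ω ι : Type*} [Fintype Ω] [Fintype ι]
    (p : Ω → ℝ) (hp : ∀ ω, 0 ≤ p ω) (hpsum : ∑ ω, p ω = 1)
    (Z D Y Y1 Y0 : Ω → ℝ) (U : Ω → ι)
    (hZbin : ∀ ω, Z ω = 0 ∨ Z ω = 1) (hDbin : ∀ ω, D ω = 0 ∨ D ω = 1)
    (hYobs : ∀ ω, Y ω = D ω * Y1 ω + (1 - D ω) * Y0 ω)
    (hpos : ∀ (z : ℝ) (u : ι), (z = 0 ∨ z = 1) →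
      0 < prb p (fun ω => Z ω = z ∧ U ω = u))
    (hindep : ∀ (y1 y0 : ℝ) (u : ι) (z : ℝ),
      prb p (fun ω => Y1 ω = y1 ∧ Y0 ω = y0 ∧ U ω = u ∧ Z ω = z) =
        prb p (fun ω => Y1 ω = y1 ∧ Y0 ω = y0 ∧ U ω = u) * prb p (fun ω => Z ω = z))
    (hcind : ∀ (y1 y0 d z : ℝ) (u : ι),
      cpr p (fun ω => Y1 ω = y1 ∧ Y0 ω = y0 ∧ D ω = d) (fun ω => Z ω = z ∧ U ω = u) =
        cpr p (fun ω => Y1 ω = y1 ∧ Y0 ω = y0) (fun ω => Z ω = z ∧ U ω = u) *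
          cpr p (fun ω => D ω = d) (fun ω => Z ω = z ∧ U ω = u))
    (w : ι → ℝ)
    (hw : ∀ u, w u = cpr p (fun ω => D ω = 1) (fun ω => Z ω = 1 ∧ U ω = u) -
                    cpr p (fun ω => D ω = 1) (fun ω => Z ω = 0 ∧ U ω = u))
    (hZ1 : 0 < prb p (fun ω => Z ω = 1)) (hZ0 : 0 < prb p (fun ω => Z ω = 0))
    (hEw : exv p (fun ω => w (U ω)) ≠ 0) :
    (cex p Y (fun ω => Z ω = 1) - cex p Y (fun ω => Z ω = 0)) /
        (cpr p (fun ω => D ω = 1) (fun ω => Z ω = 1) -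
          cpr p (fun ω => D ω = 1) (fun ω => Z ω = 0)) =
      exv p (fun ω => (Y1 ω - Y0 ω) * w (U ω)) / exv p (fun ω => w (U ω)) :=
  stmt3_general p Z D Y Y1 Y0 U hDbin hYobs hpos hindep hcind w hw hZ1 hZ0
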